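/- Suppose premiums are adjusted according to the reported number of claims. Then for every integer u ≥ 0, every i ∈ {1,…,l} and every n ≥ 1: ψ_i(u,n+1) = Σ_{j=1}^l t_{ij}(0)·ψ_j(u+c_i, n)·f_{XY}(0,0) + Σ_{j=1}^l t_{ij}(1)·Σ_{x=1}^{u+c_i} ψ_j(u+c_i−x, n)·f_{XY}(x,0) + Σ_{j=1}^l t_{ij}(2)·[ Σ_{x=1}^{u+c_i−1} Σ_{y=1}^{u+c_i−x} ψ_j(u+c_i−x−y, n)·f_{XY}(x,y) + q·Σ_{y=1}^{c_j} ψ'_j(0;y,n)·ξ_y(u+c_i) + q·Σ_{y=c_j+1}^∞ ξ_y(u+c_i) ] + (1−q)·Σ_{y=1}^∞ ξ_y(u+c_i) + Σ_{x=u+c_i+1}^∞ f_X(x), and moreover ψ_i(u,1) = (1−q)·Σ_{y=1}^∞ ξ_y(u+c_i) + Σ_{x=u+c_i+1}^∞ f_X(x). -/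

import Mathlib

/-!
Condition on the outcome `(x, y, d)` of the first period. The reported number of claims ignores the
by-claim carried into a period, so the ruin event of the remaining periods depends on the surplus
and the carried by-claim only through their difference. Hence, if the surplus left after the main
claim is `v` and the by-claim `y` is delayed, the process restarts as the model without carried
claim and surplus `v - y` when `y ≤ v`, and as the auxiliary model with surplus `0` and up-front
claim `y - v` when `y > v`; the latter is certain ruin as soon as `y - v` exceeds the next premium.
Splitting the first-period sum at `x = 0`, `1 ≤ x ≤ u + c_i`, `x > u + c_i`, and then at
`y = u + c_i - x`, gives the recursion; the overshooting by-claims, grouped by `y - (u + c_i - x)`,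
add up to the sums `ξ`.
-/

open scoped BigOperators

noncomputable section

namespace DelayedClaims

/-- Marginal pmf of the main claim: `f_X(x) = Σ_y f_{XY}(x,y)`. -/
def fX (f : ℕ → ℕ → ℝ) (x : ℕ) : ℝ := ∑' y : ℕ, f x y

/-- `ξ_y(m) = Σ_{x=1}^m f_{XY}(x, y + m - x)`. -/
def xi (f : ℕ → ℕ → ℝ) (y m : ℕ) : ℝ := ∑ x ∈ Finset.Icc 1 m, f x (y + m - x)

/-- Probability weight of a single period outcome `(x, y, d)`:
`d = true` means the settlement of the by-claim `y` is delayed (probability `q`). -/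
def w (f : ℕ → ℕ → ℝ) (q : ℝ) (p : ℕ × ℕ × Bool) : ℝ :=
  f p.1 p.2.1 * (if p.2.2 then q else 1 - q)

/-- Probability weight of an `n`-period path of i.i.d. period outcomes. -/
def pathWeight (f : ℕ → ℕ → ℝ) (q : ℝ) (n : ℕ) (ω : Fin n → ℕ × ℕ × Bool) : ℝ :=
  ∏ s : Fin n, w f q (ω s)

/-- Ruin indicator along a path.  Here `c` lists the premium levels,
`T i s` is the premium level following level `i` when the period adjustment
statistic equals `s`, `stat x y d carry` is the period adjustment statistic,
`i` is the current premium level, `u` the current surplus, and `carry` the amount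
of the by-claim whose settlement was delayed from the previous period (`0` if none).
In each period the premium `c i` is received up front and the settled amount
`x + (1-d)·y + carry` is paid at the end of the period; ruin occurs as soon as
the surplus becomes negative at the end of some period. -/
def ruined (l : ℕ) (c : Fin l → ℕ) (T : Fin l → ℕ → Fin l)
    (stat : ℕ → ℕ → Bool → ℕ → ℕ) :
    (n : ℕ) → (Fin n → ℕ × ℕ × Bool) → Fin l → ℤ → ℕ → Bool
  | 0, _, _, _, _ => false
  | n + 1, ω, i, u, carry =>
    let x : ℕ := (ω 0).1
    let y : ℕ := (ω 0).2.1
    let d : Bool := (ω 0).2.2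
    let u' : ℤ := u + (c i : ℤ) - ((x : ℤ) + (if d then 0 else (y : ℤ)) + (carry : ℤ))
    if u' < 0 then true
    else ruined l c T stat n (fun s => ω s.succ) (T i (stat x y d carry)) u'
      (if d then y else 0)

/-- `ψ'_i(u; z, n)`: the finite-time ruin probability over horizon `n` of the model with
an up-front delayed by-claim `z` settled at the end of period 1 (taking `z = 0` gives the
model without an up-front delayed by-claim), with initial premium level `i` and
initial surplus `u`.  By convention it equals `1` for `u < 0` and `0` for `n = 0`. -/
def psiAux (l : ℕ) (c : Fin l → ℕ) (T : Fin l → ℕ → Fin l)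
    (stat : ℕ → ℕ → Bool → ℕ → ℕ) (f : ℕ → ℕ → ℝ) (q : ℝ)
    (i : Fin l) (u : ℤ) (z : ℕ) (n : ℕ) : ℝ :=
  if u < 0 then 1
  else ∑' ω : Fin n → ℕ × ℕ × Bool,
    pathWeight f q n ω * (if ruined l c T stat n ω i u z then 1 else 0)

/-- `ψ_i(u, n)`: finite-time ruin probability without an up-front delayed by-claim. -/
def psi (l : ℕ) (c : Fin l → ℕ) (T : Fin l → ℕ → Fin l)
    (stat : ℕ → ℕ → Bool → ℕ → ℕ) (f : ℕ → ℕ → ℝ) (q : ℝ)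
    (i : Fin l) (u : ℤ) (n : ℕ) : ℝ :=
  psiAux l c T stat f q i u 0 n

/-- Adjustment statistic: aggregate reported claims `X + Y`. -/
def statRep (x y : ℕ) (_ : Bool) (_ : ℕ) : ℕ := x + y

/-- Adjustment statistic: aggregate settled claims `X + (1-D)·Y + carry`. -/
def statSet (x y : ℕ) (d : Bool) (carry : ℕ) : ℕ := x + (if d then 0 else y) + carry

/-- Adjustment statistic: reported number of claims `1{X>0} + 1{Y>0}`. -/
def statRepN (x y : ℕ) (_ : Bool) (_ : ℕ) : ℕ :=
  (if 0 < x then 1 else 0) + (if 0 < y then 1 else 0)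

/-- Adjustment statistic: settled number of claims
`1{X>0} + 1{Y>0 and not delayed} + 1{delayed by-claim from the previous period}`. -/
def statSetN (x y : ℕ) (d : Bool) (carry : ℕ) : ℕ :=
  (if 0 < x then 1 else 0) + (if 0 < y ∧ d = false then 1 else 0) +
    (if 0 < carry then 1 else 0)

theorem hasSum_prod_fin_pi {α : Type*} {μ : α → ℝ} {a : ℝ} (hμ0 : 0 ≤ μ) (hμ : HasSum μ a)
    (n : ℕ) : HasSum (fun ω : Fin n → α => ∏ s, μ (ω s)) (a ^ n) := by
  induction n with
  | zero => simp
  | succ n ih =>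
    set P := fun ω : Fin n → α => ∏ s, μ (ω s)
    have hP : 0 ≤ P := fun ω => Finset.prod_nonneg fun s _ => hμ0 _
    have hcons : (fun ω : Fin (n + 1) → α => ∏ s, μ (ω s)) ∘ Fin.consEquiv (fun _ => α) =
        fun p => μ p.1 * P p.2 := by
      funext p
      simp [P, Fin.prod_univ_succ]
    rw [← (Fin.consEquiv fun _ => α).hasSum_iff, hcons, pow_succ']
    exact hμ.mul ih (.mul_of_nonneg hμ.summable ih.summable hμ0 hP)

theorem sum_range_succ_eq_sum_Icc {M : Type*} [AddCommMonoid M] (g : ℕ → M) (v : ℕ) :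
    ∑ k ∈ Finset.range v, g (k + 1) = ∑ k ∈ Finset.Icc 1 v, g k := by
  rw [← Finset.Ico_add_one_right_eq_Icc, Finset.sum_Ico_eq_sum_range, Nat.add_sub_cancel]
  simp only [add_comm 1]

theorem sum_Icc_sub_one_sum_Icc_sub {M : Type*} [AddCommMonoid M] (g : ℕ → ℕ → M) (m : ℕ) :
    ∑ x ∈ Finset.Icc 1 (m - 1), ∑ y ∈ Finset.Icc 1 (m - x), g x y =
      ∑ x ∈ Finset.Icc 1 m, ∑ y ∈ Finset.Icc 1 (m - x), g x y := by
  cases m with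
  | zero => rfl
  | succ m => simp [Finset.sum_Icc_succ_top (Nat.le_add_left 1 m)]

section SplitTsum

variable {G : Type*} [AddCommGroup G] [TopologicalSpace G] [IsTopologicalAddGroup G] [T2Space G]
  {g : ℕ → G}

theorem tsum_succ_eq_sum_Icc_add_tsum (hg : Summable fun k => g (k + 1)) (v : ℕ) :
    ∑' k, g (k + 1) = ∑ k ∈ Finset.Icc 1 v, g k + ∑' k, g (v + 1 + k) := by
  rw [← hg.sum_add_tsum_nat_add v, sum_range_succ_eq_sum_Icc]
  congr 2 with k
  ring_nf

theorem tsum_eq_add_sum_Icc_add_tsum (hg : Summable g) (v : ℕ) :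
    ∑' k, g k = g 0 + ∑ k ∈ Finset.Icc 1 v, g k + ∑' k, g (v + 1 + k) := by
  rw [hg.tsum_eq_zero_add, tsum_succ_eq_sum_Icc_add_tsum ((summable_nat_add_iff 1).2 hg) v,
    add_assoc]

end SplitTsum

section ClaimDistribution

variable {f : ℕ → ℕ → ℝ} {q : ℝ}

theorem w_nonneg (hfnn : ∀ x y, 0 ≤ f x y) (hq0 : 0 ≤ q) (hq1 : q ≤ 1) : 0 ≤ w f q :=
  fun _ => mul_nonneg (hfnn _ _) (by split <;> linarith)

theorem hasSum_w (hfnn : ∀ x y, 0 ≤ f x y) (hf : HasSum (fun p : ℕ × ℕ => f p.1 p.2) 1)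
    (hq0 : 0 ≤ q) (hq1 : q ≤ 1) : HasSum (w f q) 1 := by
  set B := fun d : Bool => if d then q else 1 - q
  have hB0 : 0 ≤ B := fun d => by by_cases d <;> simp [B, *]
  have hB : HasSum B 1 := by simpa [B] using hasSum_fintype B
  have hassoc : w f q ∘ Equiv.prodAssoc ℕ ℕ Bool = fun p => f p.1.1 p.1.2 * B p.2 := rfl
  rw [← (Equiv.prodAssoc ℕ ℕ Bool).hasSum_iff, hassoc, ← mul_one (1 : ℝ)]
  exact hf.mul hB (.mul_of_nonneg hf.summable hB.summable (fun p => hfnn _ _) hB0)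

theorem xi_nonneg (hfnn : ∀ x y, 0 ≤ f x y) (y m : ℕ) : 0 ≤ xi f y m :=
  Finset.sum_nonneg fun _ _ => hfnn _ _

theorem summable_xi (hf : Summable fun p : ℕ × ℕ => f p.1 p.2) (m : ℕ) :
    Summable fun y => xi f y m := by
  refine summable_sum fun x hx => ?_
  have hxm : x ≤ m := (Finset.mem_Icc.1 hx).2
  exact (hf.prod_factor x).comp_injective fun y₁ y₂ (hy : y₁ + m - x = y₂ + m - x) => by omega

theorem sum_Icc_tsum_eq_tsum_xi_mul (hfnn : ∀ x y, 0 ≤ f x y)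
    (hf : Summable fun p : ℕ × ℕ => f p.1 p.2) (m : ℕ) {h : ℕ → ℝ} (hh0 : 0 ≤ h) (hh1 : h ≤ 1) :
    ∑ x ∈ Finset.Icc 1 m, ∑' k, f x (k + 1 + m - x) * h k = ∑' k, xi f (k + 1) m * h k := by
  simp only [xi, Finset.sum_mul]
  refine (Summable.tsum_finsetSum fun x hx => ?_).symm
  have hxm : x ≤ m := (Finset.mem_Icc.1 hx).2
  have hshift : Summable fun k => f x (k + 1 + m - x) := (hf.prod_factor x).comp_injective
    fun k₁ k₂ (hk : k₁ + 1 + m - x = k₂ + 1 + m - x) => by omega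
  exact hshift.of_nonneg_of_le (fun k => mul_nonneg (hfnn _ _) (hh0 k))
    (fun k => mul_le_of_le_one_right (hfnn _ _) (hh1 k))

end ClaimDistribution

section Model

variable {l : ℕ} {c : Fin l → ℕ} {T : Fin l → ℕ → Fin l} {stat : ℕ → ℕ → Bool → ℕ → ℕ}
  {f : ℕ → ℕ → ℝ} {q : ℝ}

theorem pathWeight_nonneg (hw0 : 0 ≤ w f q) (n : ℕ) : 0 ≤ pathWeight f q n :=
  fun _ => Finset.prod_nonneg fun _ _ => hw0 _

theorem hasSum_pathWeight (hw0 : 0 ≤ w f q) (hw : HasSum (w f q) 1) (n : ℕ) :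
    HasSum (pathWeight f q n) 1 := by
  have h := hasSum_prod_fin_pi hw0 hw n
  rw [one_pow] at h
  exact h

theorem pathWeight_cons {n : ℕ} (a : ℕ × ℕ × Bool) (τ : Fin n → ℕ × ℕ × Bool) :
    pathWeight f q (n + 1) (Fin.cons a τ) = w f q a * pathWeight f q n τ := by
  simp [pathWeight, Fin.prod_univ_succ]

theorem pathWeight_mul_indicator_le (hw0 : 0 ≤ w f q) {n : ℕ} (ω : Fin n → ℕ × ℕ × Bool)
    (b : Bool) : pathWeight f q n ω * (if b then 1 else 0) ≤ pathWeight f q n ω :=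
  mul_le_of_le_one_right (pathWeight_nonneg hw0 n ω) (by split <;> norm_num)

theorem summable_pathWeight_mul_indicator (hw0 : 0 ≤ w f q) (hw : HasSum (w f q) 1) (n : ℕ)
    (E : (Fin n → ℕ × ℕ × Bool) → Bool) :
    Summable fun ω => pathWeight f q n ω * if E ω then (1 : ℝ) else 0 :=
  (hasSum_pathWeight hw0 hw n).summable.of_nonneg_of_le
    (fun ω => mul_nonneg (pathWeight_nonneg hw0 n ω) (by split <;> norm_num))
    (fun ω => pathWeight_mul_indicator_le hw0 ω _)

theorem psiAux_of_neg {i : Fin l} {u : ℤ} (hu : u < 0) (z n : ℕ) :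
    psiAux l c T stat f q i u z n = 1 :=
  if_pos hu

theorem psiAux_zero {i : Fin l} {u : ℤ} (hu : 0 ≤ u) (z : ℕ) :
    psiAux l c T stat f q i u z 0 = 0 := by
  simp [psiAux, not_lt.2 hu, ruined]

theorem psiAux_nonneg (hw0 : 0 ≤ w f q) (i : Fin l) (u : ℤ) (z n : ℕ) :
    0 ≤ psiAux l c T stat f q i u z n := by
  unfold psiAux
  split
  · norm_num
  · exact tsum_nonneg fun ω => mul_nonneg (pathWeight_nonneg hw0 n ω) (by split <;> norm_num)

theorem psiAux_le_one (hw0 : 0 ≤ w f q) (hw : HasSum (w f q) 1) (i : Fin l) (u : ℤ)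
    (z n : ℕ) : psiAux l c T stat f q i u z n ≤ 1 := by
  unfold psiAux
  split
  · rfl
  · calc _ ≤ ∑' ω, pathWeight f q n ω :=
          (summable_pathWeight_mul_indicator hw0 hw n _).tsum_le_tsum
            (fun ω => pathWeight_mul_indicator_le hw0 ω _) (hasSum_pathWeight hw0 hw n).summable
      _ = 1 := (hasSum_pathWeight hw0 hw n).tsum_eq

theorem tsum_pathWeight_mul_ruined_cons (hw0 : 0 ≤ w f q) (hw : HasSum (w f q) 1) (i : Fin l)
    (u : ℤ) (z n : ℕ) (a : ℕ × ℕ × Bool) :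
    ∑' τ, pathWeight f q n τ *
        (if ruined l c T stat (n + 1) (Fin.cons a τ) i u z then (1 : ℝ) else 0) =
      psiAux l c T stat f q (T i (stat a.1 a.2.1 a.2.2 z))
        (u + c i - (a.1 + (if a.2.2 then 0 else (a.2.1 : ℤ)) + z)) (if a.2.2 then a.2.1 else 0)
        n := by
  by_cases hruin : u + c i - (a.1 + (if a.2.2 then 0 else (a.2.1 : ℤ)) + z) < 0
  · simp only [ruined, Fin.cons_zero, hruin, if_true, mul_one, psiAux_of_neg hruin]
    exact (hasSum_pathWeight hw0 hw n).tsum_eq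
  · simp only [ruined, Fin.cons_zero, Fin.cons_succ, hruin, if_false, psiAux]

/-- Immediate ruin needs no separate case: `psiAux` is `1` at a negative surplus. -/
theorem psiAux_succ (hw0 : 0 ≤ w f q) (hw : HasSum (w f q) 1) (i : Fin l) {u : ℤ} (hu : 0 ≤ u)
    (z n : ℕ) :
    psiAux l c T stat f q i u z (n + 1) = ∑' a : ℕ × ℕ × Bool, w f q a *
      psiAux l c T stat f q (T i (stat a.1 a.2.1 a.2.2 z))
        (u + c i - (a.1 + (if a.2.2 then 0 else (a.2.1 : ℤ)) + z)) (if a.2.2 then a.2.1 else 0)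
        n := by
  let e := Fin.consEquiv fun _ : Fin (n + 1) => ℕ × ℕ × Bool
  have hsum : Summable fun p => pathWeight f q (n + 1) (e p) *
      if ruined l c T stat (n + 1) (e p) i u z then (1 : ℝ) else 0 :=
    (e.summable_iff (f := fun ω => pathWeight f q (n + 1) ω *
      if ruined l c T stat (n + 1) ω i u z then (1 : ℝ) else 0)).2
      (summable_pathWeight_mul_indicator hw0 hw (n + 1) _)
  rw [psiAux, if_neg (not_lt.2 hu), ← e.tsum_eq, hsum.tsum_prod]
  refine tsum_congr fun a => ?_
  rw [← tsum_pathWeight_mul_ruined_cons hw0 hw i u z n a, ← tsum_mul_left]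
  refine tsum_congr fun τ => ?_
  rw [← mul_assoc, ← pathWeight_cons]
  rfl

theorem ruined_eq_of_sub_eq (hstat : ∀ x y d z₁ z₂, stat x y d z₁ = stat x y d z₂) {n : ℕ}
    (ω : Fin n → ℕ × ℕ × Bool) (j : Fin l) {u₁ u₂ : ℤ} {z₁ z₂ : ℕ} (h : u₁ - z₁ = u₂ - z₂) :
    ruined l c T stat n ω j u₁ z₁ = ruined l c T stat n ω j u₂ z₂ := by
  cases n with
  | zero => rfl
  | succ n =>
    have hsurplus : ∀ e : ℤ, u₁ + c j - ((ω 0).1 + e + z₁) = u₂ + c j - ((ω 0).1 + e + z₂) :=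
      fun e => by linarith
    simp only [ruined, hsurplus, hstat _ _ _ z₁ z₂]

theorem psiAux_eq_of_sub_eq (hstat : ∀ x y d z₁ z₂, stat x y d z₁ = stat x y d z₂) (j : Fin l)
    {u₁ u₂ : ℤ} {z₁ z₂ : ℕ} (hu₁ : 0 ≤ u₁) (hu₂ : 0 ≤ u₂) (h : u₁ - z₁ = u₂ - z₂) (n : ℕ) :
    psiAux l c T stat f q j u₁ z₁ n = psiAux l c T stat f q j u₂ z₂ n := by
  simp only [psiAux, not_lt.2 hu₁, not_lt.2 hu₂, if_false, ruined_eq_of_sub_eq hstat _ j h]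

theorem psiAux_succ_eq_one_of_lt (hw0 : 0 ≤ w f q) (hw : HasSum (w f q) 1) (j : Fin l) {u : ℤ}
    (hu : 0 ≤ u) {z : ℕ} (hz : u + c j < z) (n : ℕ) :
    psiAux l c T stat f q j u z (n + 1) = 1 := by
  rw [psiAux_succ hw0 hw j hu]
  calc _ = ∑' a, w f q a := tsum_congr fun a => by
          rw [psiAux_of_neg (by split <;> omega), mul_one]
    _ = 1 := hw.tsum_eq

end Model

theorem statRepN_of_pos_zero {x : ℕ} (hx : 0 < x) (d : Bool) (z : ℕ) : statRepN x 0 d z = 1 := by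
  simp [statRepN, hx]

theorem statRepN_of_pos_pos {x y : ℕ} (hx : 0 < x) (hy : 0 < y) (d : Bool) (z : ℕ) :
    statRepN x y d z = 2 := by
  simp [statRepN, hx, hy]

/-- Ruin probability over the remaining `n` periods at level `j`, seen at the end of a period whose
main claim left the surplus `v` and whose by-claim `y` is settled at once with probability `1 - q`
and at the end of the next period with probability `q`. -/
def psiByClaim (l : ℕ) (c : Fin l → ℕ) (T : Fin l → ℕ → Fin l) (f : ℕ → ℕ → ℝ) (q : ℝ)
    (j : Fin l) (v : ℤ) (y n : ℕ) : ℝ :=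
  (1 - q) * psi l c T statRepN f q j (v - y) n + q * psiAux l c T statRepN f q j v y n

section ReportedNumber

variable {l : ℕ} {c : Fin l → ℕ} {T : Fin l → ℕ → Fin l} {f : ℕ → ℕ → ℝ} {q : ℝ}

theorem psi_succ_eq_tsum (hw0 : 0 ≤ w f q) (hw : HasSum (w f q) 1) (i : Fin l) {u : ℤ}
    (hu : 0 ≤ u) (n : ℕ) :
    psi l c T statRepN f q i u (n + 1) = ∑' p : ℕ × ℕ, f p.1 p.2 *
      psiByClaim l c T f q (T i (statRepN p.1 p.2 false 0)) (u + c i - p.1) p.2 n := by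
  let e := Equiv.prodAssoc ℕ ℕ Bool
  let g := fun a : ℕ × ℕ × Bool => w f q a * psiAux l c T statRepN f q
    (T i (statRepN a.1 a.2.1 a.2.2 0))
    (u + c i - (a.1 + (if a.2.2 then 0 else (a.2.1 : ℤ)) + ((0 : ℕ) : ℤ)))
    (if a.2.2 then a.2.1 else 0) n
  have hg : Summable fun p => g (e p) := (e.summable_iff (f := g)).2 <|
    hw.summable.of_nonneg_of_le (fun a => mul_nonneg (hw0 a) (psiAux_nonneg hw0 _ _ _ _))
      (fun a => mul_le_of_le_one_right (hw0 a) (psiAux_le_one hw0 hw _ _ _ _))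
  rw [psi, psiAux_succ hw0 hw i hu, ← e.tsum_eq, hg.tsum_prod]
  refine tsum_congr fun p => ?_
  rw [tsum_bool]
  simp only [g, e, Equiv.prodAssoc_apply, w, psiByClaim, psi, statRepN, if_false, if_true,
    Bool.false_eq_true]
  ring_nf

theorem psiByClaim_of_neg (j : Fin l) {v : ℤ} (hv : v < 0) (y n : ℕ) :
    psiByClaim l c T f q j v y n = 1 := by
  rw [psiByClaim, psi, psiAux_of_neg hv, psiAux_of_neg (by omega)]
  ring

theorem psiByClaim_of_le (j : Fin l) {v y : ℕ} (h : y ≤ v) (n : ℕ) :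
    psiByClaim l c T f q j v y n = psi l c T statRepN f q j (v - y : ℕ) n := by
  have hcast : ((v - y : ℕ) : ℤ) = v - y := by omega
  rw [psiByClaim, ← hcast, psi, psiAux_eq_of_sub_eq (fun _ _ _ _ _ => rfl) j (Int.natCast_nonneg v)
    (Int.natCast_nonneg (v - y)) (z₂ := 0) (by omega)]
  ring

theorem psiByClaim_of_lt (j : Fin l) {v y : ℕ} (h : v < y) (n : ℕ) :
    psiByClaim l c T f q j v y n = 1 - q + q * psiAux l c T statRepN f q j 0 (y - v) n := by
  rw [psiByClaim, psi, psiAux_of_neg (by omega), psiAux_eq_of_sub_eq (fun _ _ _ _ _ => rfl) j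
    (Int.natCast_nonneg v) le_rfl (z₂ := y - v) (by omega)]
  ring

theorem psiByClaim_zero_of_pos (j : Fin l) {y : ℕ} (hy : 0 < y) (n : ℕ) :
    psiByClaim l c T f q j 0 y n = 1 - q + q * psiAux l c T statRepN f q j 0 y n := by
  simpa using psiByClaim_of_lt (c := c) (T := T) (f := f) (q := q) j hy n

theorem psiByClaim_eq_zero_sub (j : Fin l) {v y : ℕ} (h : v < y) (n : ℕ) :
    psiByClaim l c T f q j v y n = psiByClaim l c T f q j 0 (y - v) n := by
  rw [psiByClaim_of_lt j h, psiByClaim_zero_of_pos j (by omega)]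

theorem psiByClaim_nonneg (hw0 : 0 ≤ w f q) (hq0 : 0 ≤ q) (hq1 : q ≤ 1) (j : Fin l) (v : ℤ)
    (y n : ℕ) : 0 ≤ psiByClaim l c T f q j v y n :=
  add_nonneg (mul_nonneg (by linarith) (psiAux_nonneg hw0 _ _ _ _))
    (mul_nonneg hq0 (psiAux_nonneg hw0 _ _ _ _))

theorem psiByClaim_le_one (hw0 : 0 ≤ w f q) (hw : HasSum (w f q) 1) (hq0 : 0 ≤ q) (hq1 : q ≤ 1)
    (j : Fin l) (v : ℤ) (y n : ℕ) : psiByClaim l c T f q j v y n ≤ 1 := by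
  have h₁ := psiAux_le_one (c := c) (T := T) (stat := statRepN) hw0 hw j (v - y) 0 n
  have h₂ := psiAux_le_one (c := c) (T := T) (stat := statRepN) hw0 hw j v y n
  rw [psiByClaim, psi]
  nlinarith

theorem tsum_mul_psiByClaim_zero (hfdeg : ∀ y : ℕ, 0 < y → f 0 y = 0) (i : Fin l) (m n : ℕ) :
    ∑' y, f 0 y * psiByClaim l c T f q (T i (statRepN 0 y false 0)) (m - (0 : ℕ)) y n =
      psi l c T statRepN f q (T i 0) m n * f 0 0 := by
  rw [tsum_eq_single 0 fun y hy => by rw [hfdeg y (Nat.pos_of_ne_zero hy), zero_mul]]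
  rw [Nat.cast_zero, sub_zero, psiByClaim_of_le _ (Nat.zero_le m), mul_comm]
  rfl

theorem tsum_mul_psiByClaim_of_lt (i : Fin l) {m x : ℕ} (hx : m < x) (n : ℕ) :
    ∑' y, f x y * psiByClaim l c T f q (T i (statRepN x y false 0)) (m - x) y n = fX f x := by
  simp only [psiByClaim_of_neg _ (show (m : ℤ) - x < 0 by omega), mul_one]
  rfl

theorem tsum_mul_psiByClaim_of_le (i : Fin l) {m x : ℕ} (hx₁ : 1 ≤ x) (hxm : x ≤ m) (n : ℕ)
    (hsum : Summable fun y => f x y *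
      psiByClaim l c T f q (T i (statRepN x y false 0)) (m - x) y n) :
    ∑' y, f x y * psiByClaim l c T f q (T i (statRepN x y false 0)) (m - x) y n =
      psi l c T statRepN f q (T i 1) (m - x : ℕ) n * f x 0
      + ∑ y ∈ Finset.Icc 1 (m - x), psi l c T statRepN f q (T i 2) (m - x - y : ℕ) n * f x y
      + ∑' k, f x (k + 1 + m - x) * psiByClaim l c T f q (T i 2) 0 (k + 1) n := by
  have hcast : (m : ℤ) - x = (m - x : ℕ) := by omega
  simp only [hcast] at hsum ⊢
  rw [tsum_eq_add_sum_Icc_add_tsum hsum (m - x)]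
  congr 2
  · rw [statRepN_of_pos_zero hx₁, psiByClaim_of_le _ (Nat.zero_le _), mul_comm, Nat.sub_zero]
  · refine Finset.sum_congr rfl fun y hy => ?_
    obtain ⟨hy₁, hy⟩ := Finset.mem_Icc.1 hy
    rw [statRepN_of_pos_pos hx₁ hy₁, psiByClaim_of_le _ hy, mul_comm]
  · funext k
    rw [statRepN_of_pos_pos hx₁ (by omega), psiByClaim_eq_zero_sub _ (by omega),
      show m - x + 1 + k - (m - x) = k + 1 by omega, show m - x + 1 + k = k + 1 + m - x by omega]

theorem tsum_mul_psiByClaim_eq (hfnn : ∀ x y, 0 ≤ f x y)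
    (hf : Summable fun p : ℕ × ℕ => f p.1 p.2) (hfdeg : ∀ y : ℕ, 0 < y → f 0 y = 0)
    (hw0 : 0 ≤ w f q) (hw : HasSum (w f q) 1) (hq0 : 0 ≤ q) (hq1 : q ≤ 1) (i : Fin l) (m n : ℕ) :
    ∑' p : ℕ × ℕ, f p.1 p.2 *
        psiByClaim l c T f q (T i (statRepN p.1 p.2 false 0)) (m - p.1) p.2 n =
      psi l c T statRepN f q (T i 0) m n * f 0 0
      + ∑ x ∈ Finset.Icc 1 m, psi l c T statRepN f q (T i 1) (m - x : ℕ) n * f x 0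
      + ∑ x ∈ Finset.Icc 1 m, ∑ y ∈ Finset.Icc 1 (m - x),
          psi l c T statRepN f q (T i 2) (m - x - y : ℕ) n * f x y
      + ∑' k, xi f (k + 1) m * psiByClaim l c T f q (T i 2) 0 (k + 1) n
      + ∑' k, fX f (m + 1 + k) := by
  have hS : Summable fun p : ℕ × ℕ => f p.1 p.2 *
      psiByClaim l c T f q (T i (statRepN p.1 p.2 false 0)) (m - p.1) p.2 n :=
    hf.of_nonneg_of_le (fun p => mul_nonneg (hfnn _ _) (psiByClaim_nonneg hw0 hq0 hq1 _ _ _ _))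
      (fun p => mul_le_of_le_one_right (hfnn _ _) (psiByClaim_le_one hw0 hw hq0 hq1 _ _ _ _))
  rw [hS.tsum_prod, tsum_eq_add_sum_Icc_add_tsum hS.prod m, tsum_mul_psiByClaim_zero hfdeg,
    Finset.sum_congr rfl fun x hx => tsum_mul_psiByClaim_of_le i (Finset.mem_Icc.1 hx).1
      (Finset.mem_Icc.1 hx).2 n (hS.prod_factor x),
    tsum_congr fun k => tsum_mul_psiByClaim_of_lt i (by omega : m < m + 1 + k) n,
    Finset.sum_add_distrib, Finset.sum_add_distrib, sum_Icc_tsum_eq_tsum_xi_mul hfnn hf m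
      (fun k => psiByClaim_nonneg hw0 hq0 hq1 _ _ _ _)
      (fun k => psiByClaim_le_one hw0 hw hq0 hq1 _ _ _ _)]
  ring

theorem tsum_xi_mul_psiByClaim_succ (hfnn : ∀ x y, 0 ≤ f x y)
    (hf : Summable fun p : ℕ × ℕ => f p.1 p.2) (hw0 : 0 ≤ w f q) (hw : HasSum (w f q) 1)
    (j : Fin l) (m n : ℕ) :
    ∑' k, xi f (k + 1) m * psiByClaim l c T f q j 0 (k + 1) (n + 1) =
      q * ∑ y ∈ Finset.Icc 1 (c j), psiAux l c T statRepN f q j 0 y (n + 1) * xi f y m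
      + q * ∑' k, xi f (c j + 1 + k) m + (1 - q) * ∑' k, xi f (k + 1) m := by
  have hξ : Summable fun k => xi f (k + 1) m :=
    (summable_nat_add_iff (f := fun y => xi f y m) 1).2 (summable_xi hf m)
  have hψξ : Summable fun k => psiAux l c T statRepN f q j 0 (k + 1) (n + 1) * xi f (k + 1) m :=
    hξ.of_nonneg_of_le (fun k => mul_nonneg (psiAux_nonneg hw0 _ _ _ _) (xi_nonneg hfnn _ _))
      (fun k => mul_le_of_le_one_left (xi_nonneg hfnn _ _) (psiAux_le_one hw0 hw _ _ _ _))
  have hcertain : ∀ k, psiAux l c T statRepN f q j 0 (c j + 1 + k) (n + 1) = 1 := fun k =>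
    psiAux_succ_eq_one_of_lt hw0 hw j le_rfl (by omega) n
  calc ∑' k, xi f (k + 1) m * psiByClaim l c T f q j 0 (k + 1) (n + 1)
      = ∑' k, (q * (psiAux l c T statRepN f q j 0 (k + 1) (n + 1) * xi f (k + 1) m)
          + (1 - q) * xi f (k + 1) m) := tsum_congr fun k => by
        rw [psiByClaim_zero_of_pos j k.succ_pos]
        ring
    _ = q * ∑' k, psiAux l c T statRepN f q j 0 (k + 1) (n + 1) * xi f (k + 1) m
          + (1 - q) * ∑' k, xi f (k + 1) m := by
        rw [(hψξ.mul_left q).tsum_add (hξ.mul_left (1 - q)), tsum_mul_left, tsum_mul_left]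
    _ = _ := by
        rw [tsum_succ_eq_sum_Icc_add_tsum
          (g := fun y => psiAux l c T statRepN f q j 0 y (n + 1) * xi f y m) hψξ (c j)]
        simp only [hcertain, one_mul]
        ring

theorem tsum_xi_mul_psiByClaim_zero (j : Fin l) (m : ℕ) :
    ∑' k, xi f (k + 1) m * psiByClaim l c T f q j 0 (k + 1) 0 =
      (1 - q) * ∑' k, xi f (k + 1) m := by
  simp only [psiByClaim_zero_of_pos j (Nat.succ_pos _), psiAux_zero le_rfl, mul_zero, add_zero]
  rw [← tsum_mul_left]
  simp only [mul_comm]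

end ReportedNumber

theorem theorem3_reported_number_general
    (l : ℕ) (c : Fin l → ℕ)
    (f : ℕ → ℕ → ℝ) (hfnn : ∀ x y, 0 ≤ f x y)
    (hfsum : ∑' p : ℕ × ℕ, f p.1 p.2 = 1)
    (hfdeg : ∀ y : ℕ, 0 < y → f 0 y = 0)
    (q : ℝ) (hq0 : 0 ≤ q) (hq1 : q ≤ 1)
    (t : Fin l → Fin l → ℕ → ℝ) (T : Fin l → ℕ → Fin l)
    (hT : ∀ i j s, t i j s = if j = T i s then (1 : ℝ) else 0)
    (u : ℕ) (i : Fin l) (n : ℕ) (hn : 1 ≤ n) :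
    psi l c T statRepN f q i (u : ℤ) (n + 1) =
        (∑ j : Fin l, t i j 0 * psi l c T statRepN f q j ((u + c i : ℕ) : ℤ) n * f 0 0)
      + (∑ j : Fin l, t i j 1 * (∑ x ∈ Finset.Icc 1 (u + c i),
          psi l c T statRepN f q j ((u + c i - x : ℕ) : ℤ) n * f x 0))
      + (∑ j : Fin l, t i j 2 *
          ((∑ x ∈ Finset.Icc 1 (u + c i - 1), ∑ y ∈ Finset.Icc 1 (u + c i - x),
              psi l c T statRepN f q j ((u + c i - x - y : ℕ) : ℤ) n * f x y)
            + q * (∑ y ∈ Finset.Icc 1 (c j),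
                psiAux l c T statRepN f q j 0 y n * xi f y (u + c i))
            + q * (∑' k : ℕ, xi f (c j + 1 + k) (u + c i))))
      + (1 - q) * (∑' k : ℕ, xi f (k + 1) (u + c i))
      + (∑' k : ℕ, fX f (u + c i + 1 + k)) ∧
    psi l c T statRepN f q i (u : ℤ) 1 =
      (1 - q) * (∑' k : ℕ, xi f (k + 1) (u + c i))
      + (∑' k : ℕ, fX f (u + c i + 1 + k)) := by
  have hf : Summable fun p : ℕ × ℕ => f p.1 p.2 := by
    by_contra h
    simp [tsum_eq_zero_of_not_summable h] at hfsum
  have hw0 := w_nonneg hfnn hq0 hq1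
  have hw := hasSum_w hfnn (hf.hasSum_iff.2 hfsum) hq0 hq1
  have hstep : ∀ n, psi l c T statRepN f q i u (n + 1) = ∑' p : ℕ × ℕ, f p.1 p.2 *
      psiByClaim l c T f q (T i (statRepN p.1 p.2 false 0)) ((u + c i : ℕ) - p.1) p.2 n :=
    fun n => by rw [psi_succ_eq_tsum hw0 hw i (Int.natCast_nonneg u), Nat.cast_add]
  have hdecomp := tsum_mul_psiByClaim_eq (c := c) (T := T) hfnn hf hfdeg hw0 hw hq0 hq1 i (u + c i)
  obtain ⟨n, rfl⟩ : ∃ k, n = k + 1 := ⟨n - 1, by omega⟩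
  refine ⟨?_, ?_⟩
  · simp only [hT, ite_mul, one_mul, zero_mul, Finset.sum_ite_eq', Finset.mem_univ, if_true]
    rw [hstep, hdecomp, tsum_xi_mul_psiByClaim_succ hfnn hf hw0 hw, sum_Icc_sub_one_sum_Icc_sub]
    ring
  · rw [hstep, hdecomp, tsum_xi_mul_psiByClaim_zero]
    simp only [psi, psiAux_zero (Int.natCast_nonneg _), zero_mul, Finset.sum_const_zero,
      zero_add]

/-- Theorem 3: recursion for ψ when premiums are adjusted according to
the reported number of claims. -/
theorem theorem3_reported_number
    (l : ℕ) (c : Fin l → ℕ) (hcpos : ∀ i, 0 < c i) (hcmono : StrictMono c)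
    (f : ℕ → ℕ → ℝ) (hfnn : ∀ x y, 0 ≤ f x y)
    (hfsum : ∑' p : ℕ × ℕ, f p.1 p.2 = 1)
    (hfdeg : ∀ y : ℕ, 0 < y → f 0 y = 0)
    (q : ℝ) (hq0 : 0 ≤ q) (hq1 : q ≤ 1)
    (t : Fin l → Fin l → ℕ → ℝ) (T : Fin l → ℕ → Fin l)
    (hT : ∀ i j s, t i j s = if j = T i s then (1 : ℝ) else 0)
    (u : ℕ) (i : Fin l) (n : ℕ) (hn : 1 ≤ n) :
    psi l c T statRepN f q i (u : ℤ) (n + 1) =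
        (∑ j : Fin l, t i j 0 * psi l c T statRepN f q j ((u + c i : ℕ) : ℤ) n * f 0 0)
      + (∑ j : Fin l, t i j 1 * (∑ x ∈ Finset.Icc 1 (u + c i),
          psi l c T statRepN f q j ((u + c i - x : ℕ) : ℤ) n * f x 0))
      + (∑ j : Fin l, t i j 2 *
          ((∑ x ∈ Finset.Icc 1 (u + c i - 1), ∑ y ∈ Finset.Icc 1 (u + c i - x),
              psi l c T statRepN f q j ((u + c i - x - y : ℕ) : ℤ) n * f x y)
            + q * (∑ y ∈ Finset.Icc 1 (c j),
                psiAux l c T statRepN f q j 0 y n * xi f y (u + c i))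
            + q * (∑' k : ℕ, xi f (c j + 1 + k) (u + c i))))
      + (1 - q) * (∑' k : ℕ, xi f (k + 1) (u + c i))
      + (∑' k : ℕ, fX f (u + c i + 1 + k)) ∧
    psi l c T statRepN f q i (u : ℤ) 1 =
      (1 - q) * (∑' k : ℕ, xi f (k + 1) (u + c i))
      + (∑' k : ℕ, fX f (u + c i + 1 + k)) :=
  theorem3_reported_number_general l c f hfnn hfsum hfdeg q hq0 hq1 t T hT u i n hn

end DelayedClaims
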